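/- arXiv:2405.06430 — 6 statements merged into one kernel-verified Lean document; each statement's English description precedes it below -/
import Mathlib

section
/- Let (a_1, ..., a_n) be a palindromic sequence of positive integers with convergent numerators/denominators A_h, B_h (so A_{n-1} = B_n), and let s be a positive integer. Let α be the purely periodic continued fraction α = [0; overline{a_1, ..., a_n, s}], which satisfies A_n α² + s A_n α - (s B_n + B_{n-1}) = 0. Then α is an algebraic integer (i.e., a root of a monic polynomial with integer coefficients) if and only if (-1)^n s ≡ A_{n-1} B_{n-1} (mod A_n). -/
/-!
Dividing the quadratic by `A_n` shows that `α² + sα = (s B_n + B_{n-1}) / A_n` is a rational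
number, integral whenever `α` is; conversely, if this quotient is an integer `k` then `α` is a root
of the monic `X² + sX - k`. So `α` is an algebraic integer iff `A_n ∣ s B_n + B_{n-1}`.
Writing the convergents as the product of the symmetric matrices `!![a_h, 1; 1, 0]`, a palindromic
period makes the product symmetric, so `B_n = A_{n-1}`, and its determinant gives
`A_n B_{n-1} - A_{n-1}² = (-1)^n`. Modulo `A_n` this says `A_{n-1}² ≡ -(-1)^n`, which turns
`A_n ∣ s A_{n-1} + B_{n-1}` into the stated congruence.
-/

open Matrix Polynomial

section Continuants

variable {R : Type*} [CommRing R]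

def cfMatrix (x : R) : Matrix (Fin 2) (Fin 2) R := !![x, 1; 1, 0]

theorem cfMatrix_transpose (x : R) : (cfMatrix x)ᵀ = cfMatrix x := by
  ext i j
  fin_cases i <;> fin_cases j <;> rfl

theorem det_cfMatrix (x : R) : (cfMatrix x).det = -1 := by
  simp [cfMatrix, det_fin_two_of]

/-- `B h / A h` is the `h`-th convergent of `[0; a 1, …, a h]`, for `h ≤ n`. -/
structure IsConvergentSeq (n : ℕ) (a A B : ℕ → R) : Prop where
  A_zero : A 0 = 1
  A_one : A 1 = a 1
  B_zero : B 0 = 0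
  B_one : B 1 = 1
  A_rec : ∀ h, 2 ≤ h → h ≤ n → A h = a h * A (h - 1) + A (h - 2)
  B_rec : ∀ h, 2 ≤ h → h ≤ n → B h = a h * B (h - 1) + B (h - 2)

namespace IsConvergentSeq

variable {n : ℕ} {a A B : ℕ → R}

theorem matrix_eq_prod (hc : IsConvergentSeq n a A B) {h : ℕ} (h1 : 1 ≤ h) (hn : h ≤ n) :
    !![A h, A (h - 1); B h, B (h - 1)] =
      ((List.range h).map fun i => cfMatrix (a (i + 1))).prod := by
  induction h, h1 using Nat.le_induction with
  | base => simp [cfMatrix, hc.A_zero, hc.A_one, hc.B_zero, hc.B_one]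
  | succ k hk ih =>
    have hk2 : k + 1 - 2 = k - 1 := rfl
    rw [List.range_succ, List.map_append, List.prod_append, ← ih (by omega),
      hc.A_rec (k + 1) (by omega) hn, hc.B_rec (k + 1) (by omega) hn, Nat.add_sub_cancel, hk2]
    simp only [List.map_cons, List.map_nil, List.prod_singleton, cfMatrix, mul_fin_two]
    ring_nf

theorem determinant (hc : IsConvergentSeq n a A B) {h : ℕ} (h1 : 1 ≤ h) (hn : h ≤ n) :
    A h * B (h - 1) - A (h - 1) * B h = (-1) ^ h := by
  have := congrArg det (hc.matrix_eq_prod h1 hn)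
  rw [det_fin_two_of] at this
  rw [this, ← coe_detMonoidHom, map_list_prod, List.map_map]
  simp [Function.comp_def, det_cfMatrix]

theorem B_eq_A_pred_of_palindrome (hc : IsConvergentSeq n a A B) (hn : 1 ≤ n)
    (hpal : ∀ i, 1 ≤ i → i ≤ n → a i = a (n + 1 - i)) : B n = A (n - 1) := by
  have hrev : ((List.range n).map fun i => cfMatrix (a (i + 1))).reverse =
      (List.range n).map fun i => cfMatrix (a (i + 1)) := by
    have hrange : (List.range n).reverse = (List.range n).map (n - 1 - ·) := by
      simpa [← List.range_eq_range'] using List.reverse_range' (s := 0) (n := n)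
    rw [← List.map_reverse, hrange, List.map_map]
    refine List.map_congr_left fun i hi => ?_
    have hi : i < n := by simpa using hi
    simp only [Function.comp_apply]
    rw [hpal (i + 1) (by omega) (by omega)]
    congr 2
    omega
  have hsymm := congrArg transpose (hc.matrix_eq_prod hn le_rfl)
  rw [transpose_list_prod, List.map_map] at hsymm
  simp only [Function.comp_def, cfMatrix_transpose] at hsymm
  rw [hrev, ← hc.matrix_eq_prod hn le_rfl] at hsymm
  simpa using congrFun (congrFun hsymm 0) 1

theorem A_pos [PartialOrder R] [IsStrictOrderedRing R] (hc : IsConvergentSeq n a A B)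
    (ha : ∀ i, 1 ≤ i → i ≤ n → 0 < a i) : ∀ h ≤ n, 0 < A h := by
  intro h
  induction h using Nat.twoStepInduction with
  | zero => simp [hc.A_zero]
  | one => intro hn; rw [hc.A_one]; exact ha 1 le_rfl hn
  | more k ih0 ih1 =>
    intro hn
    rw [hc.A_rec (k + 2) (by omega) hn]
    have hak : 0 < a (k + 2) := ha (k + 2) (by omega) hn
    have hA0 : 0 < A k := ih0 (by omega)
    have hA1 : 0 < A (k + 1) := ih1 (by omega)
    simp only [Nat.add_sub_cancel]
    positivity

end IsConvergentSeq

end Continuants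

theorem Int.dvd_mul_add_iff_modEq {N p q s u : ℤ} (hu : u * u = 1) (h : N * q - p * p = u) :
    N ∣ s * p + q ↔ u * s ≡ p * q [ZMOD N] := by
  -- modulo `N`, `p * p ≡ -u`, so multiplication by `p` maps `s * p + q` to `p * q - u * s`
  rw [Int.modEq_iff_dvd]
  constructor
  · intro hdvd
    have : p * q - u * s = p * (s * p + q) - N * (s * q) := by linear_combination s * h
    rw [this]
    exact dvd_sub (hdvd.mul_left p) (dvd_mul_right N _)
  · intro hdvd
    have : s * p + q = u * (N * (q * q) - p * (p * q - u * s)) := by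
      linear_combination (-(u * q)) * h - (s * p + q) * hu
    rw [this]
    exact (dvd_sub (dvd_mul_right N _) (hdvd.mul_left p)).mul_left u

theorem dvd_of_isIntegral_intCast_div {K : Type*} [Field K] [CharZero K] {c N : ℤ} (hN : N ≠ 0)
    (h : IsIntegral ℤ ((c : K) / N)) : N ∣ c := by
  have hℚ : IsIntegral ℤ ((c : ℚ) / N) := by
    rw [← isIntegral_algHom_iff (algebraMap ℚ K).toIntAlgHom (algebraMap ℚ K).injective]
    simpa using h
  obtain ⟨m, hm⟩ := IsIntegrallyClosed.isIntegral_iff.mp hℚ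
  refine ⟨m, ?_⟩
  rw [eq_intCast, eq_div_iff (by exact_mod_cast hN)] at hm
  exact_mod_cast hm.symm.trans (mul_comm _ _)

theorem isIntegral_iff_dvd_of_quadratic {K : Type*} [Field K] [CharZero K] {N s c : ℤ} {α : K}
    (hN : N ≠ 0) (hα : N * α ^ 2 + s * N * α - c = 0) : IsIntegral ℤ α ↔ N ∣ c := by
  constructor
  · intro hint
    have hval : α ^ 2 + s * α = c / N := by
      rw [eq_div_iff (by exact_mod_cast hN)]
      linear_combination hα
    apply dvd_of_isIntegral_intCast_div (K := K) hN
    rw [← hval]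
    exact (hint.pow 2).add ((isIntegral_algebraMap (x := s)).mul hint)
  · rintro ⟨k, rfl⟩
    have hroot : α ^ 2 + s * α - k = 0 := by
      have : (N : K) * (α ^ 2 + s * α - k) = 0 := by push_cast at hα; linear_combination hα
      exact (mul_eq_zero.mp this).resolve_left (by exact_mod_cast hN)
    refine ⟨X ^ 2 + C s * X - C k, by monicity!, ?_⟩
    simp only [eval₂_sub, eval₂_add, eval₂_mul, eval₂_pow, eval₂_X, eval₂_C]
    simpa only [algebraMap_int_eq, eq_intCast] using hroot

theorem palindromic_cf_algebraic_integer_iff_general (n : ℕ) (hn : 1 ≤ n)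
    (a A B : ℕ → ℤ) (s : ℤ) (α : ℝ)
    (hapos : ∀ i, 1 ≤ i → i ≤ n → 0 < a i)
    (hpal : ∀ i, 1 ≤ i → i ≤ n → a i = a (n + 1 - i))
    (hA0 : A 0 = 1) (hA1 : A 1 = a 1) (hB0 : B 0 = 0) (hB1 : B 1 = 1)
    (hArec : ∀ h, 2 ≤ h → h ≤ n → A h = a h * A (h - 1) + A (h - 2))
    (hBrec : ∀ h, 2 ≤ h → h ≤ n → B h = a h * B (h - 1) + B (h - 2))
    (hαroot : (A n : ℝ) * α ^ 2 + (s : ℝ) * (A n : ℝ) * α -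
      ((s : ℝ) * (B n : ℝ) + (B (n - 1) : ℝ)) = 0) :
    IsIntegral ℤ α ↔ (-1) ^ n * s ≡ A (n - 1) * B (n - 1) [ZMOD A n] := by
  have hc : IsConvergentSeq n a A B := ⟨hA0, hA1, hB0, hB1, hArec, hBrec⟩
  have hBA : B n = A (n - 1) := hc.B_eq_A_pred_of_palindrome hn hpal
  have hAn : A n ≠ 0 := (hc.A_pos hapos n le_rfl).ne'
  have hdet : A n * B (n - 1) - A (n - 1) * A (n - 1) = (-1) ^ n := by
    simpa [hBA] using hc.determinant hn le_rfl
  rw [isIntegral_iff_dvd_of_quadratic (c := s * B n + B (n - 1)) hAn (by exact_mod_cast hαroot),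
    hBA]
  exact Int.dvd_mul_add_iff_modEq (by rw [← mul_pow]; norm_num) hdet

/-- The purely periodic continued fraction `α = [0; \overline{a_1,…,a_n,s}]`
(with palindromic period), which is the positive root of
`A_n x² + s A_n x - (s B_n + B_{n-1})`, is an algebraic integer iff
`(-1)^n s ≡ A_{n-1} B_{n-1} (mod A_n)`. -/
theorem palindromic_cf_algebraic_integer_iff (n : ℕ) (hn : 1 ≤ n)
    (a A B : ℕ → ℤ) (s : ℤ) (hs : 0 < s) (α : ℝ)
    (hapos : ∀ i, 1 ≤ i → i ≤ n → 0 < a i)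
    (hpal : ∀ i, 1 ≤ i → i ≤ n → a i = a (n + 1 - i))
    (hA0 : A 0 = 1) (hA1 : A 1 = a 1) (hB0 : B 0 = 0) (hB1 : B 1 = 1)
    (hArec : ∀ h, 2 ≤ h → h ≤ n → A h = a h * A (h - 1) + A (h - 2))
    (hBrec : ∀ h, 2 ≤ h → h ≤ n → B h = a h * B (h - 1) + B (h - 2))
    (hαpos : 0 < α)
    (hαroot : (A n : ℝ) * α ^ 2 + (s : ℝ) * (A n : ℝ) * α -
      ((s : ℝ) * (B n : ℝ) + (B (n - 1) : ℝ)) = 0) :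
    IsIntegral ℤ α ↔ (-1) ^ n * s ≡ A (n - 1) * B (n - 1) [ZMOD A n] :=
  palindromic_cf_algebraic_integer_iff_general n hn a A B s α hapos hpal hA0 hA1 hB0 hB1 hArec hBrec
    hαroot
end

section
/- Fix a positive integer m and n ≥ 1. Let α = [0; overline{m, m, ..., m, s}] be the purely periodic continued fraction whose period consists of n copies of m followed by s. If s = (-1)^n f_n(m) f_{n-1}(m) + k f_{n+1}(m) for an integer k with s > 0, then α is an algebraic integer with minimal polynomial x² + s x + t where t = (-1)^{n-1} f_{n-1}(m)² - k f_n(m). -/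
/-!
Cassini's identity `f_{n+1} f_{n-1} - f_n² = (-1)^n` turns the choice of `s` and `t` into the
identity `s f_n + f_{n-1} = -t f_{n+1}`. Dividing the quadratic relation
`f_{n+1} α² + s f_{n+1} α - (s f_n + f_{n-1}) = 0` by `f_{n+1} > 0` then shows that `α` is a root
of the monic polynomial `x² + s x + t`, which is the minimal polynomial because `α` is irrational.
-/

open Polynomial

theorem minpoly_int_eq_of_irrational {α : ℝ} (hα : Irrational α) {p : ℤ[X]} (hp : p.Monic)
    (hdeg : p.natDegree = 2) (hroot : aeval α p = 0) : minpoly ℤ α = p := by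
  have hint : IsIntegral ℤ α := ⟨p, hp, by rwa [← aeval_def]⟩
  have hnot_int : α ∉ (algebraMap ℤ ℝ).range := by
    rintro ⟨z, rfl⟩
    exact hα.ne_int z rfl
  refine (eq_of_monic_of_dvd_of_natDegree_le (minpoly.monic hint) hp
    (minpoly.isIntegrallyClosed_dvd hint hroot) ?_).symm
  exact hdeg ▸ (minpoly.two_le_natDegree_iff hint).2 hnot_int

namespace FibonacciPolynomial

variable {m : ℤ} {f : ℕ → ℤ} (hf0 : f 0 = 0) (hf1 : f 1 = 1)
  (hfrec : ∀ h, f (h + 2) = m * f (h + 1) + f h)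
include hf0 hf1 hfrec

theorem succ_pos (hm : 0 < m) (j : ℕ) : 0 < f (j + 1) := by
  have h : ∀ j, 0 < f (j + 1) ∧ 0 ≤ f j := by
    intro j
    induction j with
    | zero => simp [hf0, hf1]
    | succ i ih =>
      refine ⟨?_, ih.1.le⟩
      rw [hfrec]
      nlinarith [ih.1, ih.2]
  exact (h j).1

theorem cassini (j : ℕ) : f (j + 2) * f j - f (j + 1) ^ 2 = (-1) ^ (j + 1) := by
  induction j with
  | zero => simp [hf0, hf1]
  | succ i ih =>
    linear_combination f (i + 1) * hfrec (i + 1) - f (i + 2) * hfrec i - ih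

theorem mul_add_eq_neg_mul {n : ℕ} (hn : 1 ≤ n) (k : ℤ) :
    ((-1) ^ n * f n * f (n - 1) + k * f (n + 1)) * f n + f (n - 1) =
      -((-1) ^ (n - 1) * f (n - 1) ^ 2 - k * f n) * f (n + 1) := by
  obtain ⟨j, rfl⟩ : ∃ j, n = j + 1 := ⟨n - 1, by omega⟩
  have hsq : ((-1 : ℤ) ^ j) ^ 2 = 1 := by rw [← pow_mul, pow_mul', neg_one_sq, one_pow]
  simp only [Nat.add_sub_cancel]
  linear_combination ((-1) ^ j * f j) * cassini hf0 hf1 hfrec j - f j * hsq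

end FibonacciPolynomial

theorem constant_period_algebraic_integer_general (m : ℤ) (hm : 0 < m) (n : ℕ) (hn : 1 ≤ n)
    (f : ℕ → ℤ) (hf0 : f 0 = 0) (hf1 : f 1 = 1)
    (hfrec : ∀ h, f (h + 2) = m * f (h + 1) + f h)
    (k s t : ℤ)
    (hs : s = (-1) ^ n * f n * f (n - 1) + k * f (n + 1))
    (ht : t = (-1) ^ (n - 1) * f (n - 1) ^ 2 - k * f n)
    (α : ℝ) (hirr : Irrational α)
    (hαroot : (f (n + 1) : ℝ) * α ^ 2 + (s : ℝ) * (f (n + 1) : ℝ) * α -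
      ((s : ℝ) * (f n : ℝ) + (f (n - 1) : ℝ)) = 0) :
    IsIntegral ℤ α ∧ minpoly ℤ α = X ^ 2 + C s * X + C t := by
  have hst : (s : ℝ) * f n + f (n - 1) = -t * f (n + 1) := by
    subst hs ht
    exact_mod_cast FibonacciPolynomial.mul_add_eq_neg_mul hf0 hf1 hfrec hn k
  have hF : (f (n + 1) : ℝ) ≠ 0 := by
    exact_mod_cast (FibonacciPolynomial.succ_pos hf0 hf1 hfrec hm n).ne'
  have hroot : α ^ 2 + s * α + t = 0 :=
    mul_left_cancel₀ hF (by linear_combination hαroot + hst)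
  have hmonic : (X ^ 2 + C s * X + C t).Monic := by monicity!
  have haeval : aeval α (X ^ 2 + C s * X + C t) = 0 := by simpa using hroot
  exact ⟨⟨_, hmonic, by rwa [← aeval_def]⟩,
    minpoly_int_eq_of_irrational hirr hmonic (by compute_degree!) haeval⟩

/-- For `α = [0; \overline{m,…,m,s}]` (period: n copies of m then s), if
`s = (-1)^n f_n f_{n-1} + k f_{n+1} > 0` then `α` is an algebraic integer with
minimal polynomial `x² + s x + t`, `t = (-1)^{n-1} f_{n-1}² - k f_n`. -/
theorem constant_period_algebraic_integer (m : ℤ) (hm : 0 < m) (n : ℕ) (hn : 1 ≤ n)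
    (f : ℕ → ℤ) (hf0 : f 0 = 0) (hf1 : f 1 = 1)
    (hfrec : ∀ h, f (h + 2) = m * f (h + 1) + f h)
    (k s t : ℤ)
    (hs : s = (-1) ^ n * f n * f (n - 1) + k * f (n + 1)) (hspos : 0 < s)
    (ht : t = (-1) ^ (n - 1) * f (n - 1) ^ 2 - k * f n)
    (α : ℝ) (hα0 : 0 < α) (hα1 : α < 1) (hirr : Irrational α)
    (hαroot : (f (n + 1) : ℝ) * α ^ 2 + (s : ℝ) * (f (n + 1) : ℝ) * α -
      ((s : ℝ) * (f n : ℝ) + (f (n - 1) : ℝ)) = 0) :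
    IsIntegral ℤ α ∧ minpoly ℤ α = X ^ 2 + C s * X + C t :=
  constant_period_algebraic_integer_general m hm n hn f hf0 hf1 hfrec k s t hs ht α hirr hαroot
end

section
/- Let M = ((2,0),(0,1)), N = ((1,0),(0,2)), P = ((2,0),(1,1)), Q = ((1,1),(0,2)), R = ((1,1),(0,1)), L = ((1,0),(1,1)). For every even positive integer e: P R^e = R L R^{(e-2)/2} Q, Q L^e = L R L^{(e-2)/2} P, N R^e = R^{e/2} N, and M L^e = L^{e/2} M. -/
/-!
With `R = !![1, 1; 0, 1]` and `L = !![1, 0; 1, 1]`, each of `M, N, P, Q` semiconjugates `R²` or `L²`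
to a single letter: `N R² = R N`, `Q R² = R Q`, `M L² = L M`, `P L² = L P`. Hence `N R^(2m) = R^m N`
and so on. For the rules starting in `P` and `Q` one peels off the first `R²` (resp. `L²`) using
`P R² = R L Q` and `Q L² = L R P`, and then commutes the remaining `(R²)^m` past `Q` (resp. `(L²)^m`
past `P`).
-/

open Matrix

section

variable {α : Type*} [Semiring α]

theorem semiconjBy_N_R_sq :
    SemiconjBy (!![1, 0; 0, 2] : Matrix (Fin 2) (Fin 2) α) (!![1, 1; 0, 1] ^ 2) !![1, 1; 0, 1] := by
  simp only [SemiconjBy, sq, mul_fin_two]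
  norm_num

theorem semiconjBy_M_L_sq :
    SemiconjBy (!![2, 0; 0, 1] : Matrix (Fin 2) (Fin 2) α) (!![1, 0; 1, 1] ^ 2) !![1, 0; 1, 1] := by
  simp only [SemiconjBy, sq, mul_fin_two]
  norm_num

theorem semiconjBy_Q_R_sq :
    SemiconjBy (!![1, 1; 0, 2] : Matrix (Fin 2) (Fin 2) α) (!![1, 1; 0, 1] ^ 2) !![1, 1; 0, 1] := by
  simp only [SemiconjBy, sq, mul_fin_two]
  norm_num

theorem semiconjBy_P_L_sq :
    SemiconjBy (!![2, 0; 1, 1] : Matrix (Fin 2) (Fin 2) α) (!![1, 0; 1, 1] ^ 2) !![1, 0; 1, 1] := by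
  simp only [SemiconjBy, sq, mul_fin_two]
  norm_num

theorem P_mul_R_sq :
    (!![2, 0; 1, 1] : Matrix (Fin 2) (Fin 2) α) * !![1, 1; 0, 1] ^ 2 =
      !![1, 1; 0, 1] * !![1, 0; 1, 1] * !![1, 1; 0, 2] := by
  simp only [sq, mul_fin_two]
  norm_num

theorem Q_mul_L_sq :
    (!![1, 1; 0, 2] : Matrix (Fin 2) (Fin 2) α) * !![1, 0; 1, 1] ^ 2 =
      !![1, 0; 1, 1] * !![1, 1; 0, 1] * !![2, 0; 1, 1] := by
  simp only [sq, mul_fin_two]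
  norm_num

end

/-- Raney transducer rules for `e` even:
`P R^e = R L R^{(e-2)/2} Q`, `Q L^e = L R L^{(e-2)/2} P`,
`N R^e = R^{e/2} N`, `M L^e = L^{e/2} M`. -/
theorem raney_even (e : ℕ) (he : 1 ≤ e) (heven : Even e) :
    ((!![2, 0; 1, 1] : Matrix (Fin 2) (Fin 2) ℤ) * !![1, 1; 0, 1] ^ e =
      !![1, 1; 0, 1] * !![1, 0; 1, 1] * !![1, 1; 0, 1] ^ ((e - 2) / 2) * !![1, 1; 0, 2]) ∧
    ((!![1, 1; 0, 2] : Matrix (Fin 2) (Fin 2) ℤ) * !![1, 0; 1, 1] ^ e =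
      !![1, 0; 1, 1] * !![1, 1; 0, 1] * !![1, 0; 1, 1] ^ ((e - 2) / 2) * !![2, 0; 1, 1]) ∧
    ((!![1, 0; 0, 2] : Matrix (Fin 2) (Fin 2) ℤ) * !![1, 1; 0, 1] ^ e =
      !![1, 1; 0, 1] ^ (e / 2) * !![1, 0; 0, 2]) ∧
    ((!![2, 0; 0, 1] : Matrix (Fin 2) (Fin 2) ℤ) * !![1, 0; 1, 1] ^ e =
      !![1, 0; 1, 1] ^ (e / 2) * !![2, 0; 0, 1]) := by
  obtain ⟨m, rfl⟩ : ∃ m, e = 2 * (m + 1) := ⟨e / 2 - 1, by rcases heven with ⟨k, rfl⟩; omega⟩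
  rw [show (2 * (m + 1) - 2) / 2 = m by omega, show 2 * (m + 1) / 2 = m + 1 by omega,
    pow_mul, pow_mul]
  refine ⟨?_, ?_, semiconjBy_N_R_sq.pow_right _, semiconjBy_M_L_sq.pow_right _⟩
  · rw [pow_succ', ← mul_assoc, P_mul_R_sq, mul_assoc, (semiconjBy_Q_R_sq.pow_right m).eq,
      ← mul_assoc]
  · rw [pow_succ', ← mul_assoc, Q_mul_L_sq, mul_assoc, (semiconjBy_P_L_sq.pow_right m).eq,
      ← mul_assoc]
end

section
/- Let M = ((2,0),(0,1)), N = ((1,0),(0,2)), P = ((2,0),(1,1)), Q = ((1,1),(0,2)), R = ((1,1),(0,1)), L = ((1,0),(1,1)). For every odd positive integer e: P R^e = R L R^{(e-1)/2} N, Q L^e = L R L^{(e-1)/2} M, N R^e = R^{(e-1)/2} Q, and M L^e = L^{(e-1)/2} P. -/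
open Matrix

/-
Powers of the shears are explicit, `R^n = !![1, n; 0, 1]` and `L^n = !![1, 0; n, 1]`. Writing the odd
exponent as `e = 2k + 1`, each of the four rules becomes an identity between products of explicit
2×2 matrices whose entries are linear in `k`, which is checked entrywise.
-/

section Shear

variable {α : Type*} [Semiring α]

theorem upperShear_pow (a : α) (n : ℕ) : !![1, a; 0, 1] ^ n = !![1, (n : α) * a; 0, 1] := by
  induction n with
  | zero => simp [one_fin_two]
  | succ n ih =>
    rw [pow_succ', ih, mul_fin_two]
    simp [add_one_mul]

theorem lowerShear_pow (a : α) (n : ℕ) : !![1, 0; a, 1] ^ n = !![1, 0; (n : α) * a, 1] := by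
  induction n with
  | zero => simp [one_fin_two]
  | succ n ih =>
    rw [pow_succ, ih, mul_fin_two]
    simp [add_one_mul]

end Shear

section RaneyOdd

variable (k : ℕ)

theorem raney_P_mul_R_pow_odd :
    (!![2, 0; 1, 1] : Matrix (Fin 2) (Fin 2) ℤ) * !![1, 1; 0, 1] ^ (2 * k + 1) =
      !![1, 1; 0, 1] * !![1, 0; 1, 1] * !![1, 1; 0, 1] ^ k * !![1, 0; 0, 2] := by
  simp only [upperShear_pow, mul_fin_two]
  push_cast
  ring_nf

theorem raney_Q_mul_L_pow_odd :
    (!![1, 1; 0, 2] : Matrix (Fin 2) (Fin 2) ℤ) * !![1, 0; 1, 1] ^ (2 * k + 1) =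
      !![1, 0; 1, 1] * !![1, 1; 0, 1] * !![1, 0; 1, 1] ^ k * !![2, 0; 0, 1] := by
  simp only [lowerShear_pow, mul_fin_two]
  push_cast
  ring_nf

theorem raney_N_mul_R_pow_odd :
    (!![1, 0; 0, 2] : Matrix (Fin 2) (Fin 2) ℤ) * !![1, 1; 0, 1] ^ (2 * k + 1) =
      !![1, 1; 0, 1] ^ k * !![1, 1; 0, 2] := by
  simp only [upperShear_pow, mul_fin_two]
  push_cast
  ring_nf

theorem raney_M_mul_L_pow_odd :
    (!![2, 0; 0, 1] : Matrix (Fin 2) (Fin 2) ℤ) * !![1, 0; 1, 1] ^ (2 * k + 1) =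
      !![1, 0; 1, 1] ^ k * !![2, 0; 1, 1] := by
  simp only [lowerShear_pow, mul_fin_two]
  push_cast
  ring_nf

end RaneyOdd

theorem raney_odd_general (e : ℕ) (hodd : Odd e) :
    ((!![2, 0; 1, 1] : Matrix (Fin 2) (Fin 2) ℤ) * !![1, 1; 0, 1] ^ e =
      !![1, 1; 0, 1] * !![1, 0; 1, 1] * !![1, 1; 0, 1] ^ ((e - 1) / 2) * !![1, 0; 0, 2]) ∧
    ((!![1, 1; 0, 2] : Matrix (Fin 2) (Fin 2) ℤ) * !![1, 0; 1, 1] ^ e =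
      !![1, 0; 1, 1] * !![1, 1; 0, 1] * !![1, 0; 1, 1] ^ ((e - 1) / 2) * !![2, 0; 0, 1]) ∧
    ((!![1, 0; 0, 2] : Matrix (Fin 2) (Fin 2) ℤ) * !![1, 1; 0, 1] ^ e =
      !![1, 1; 0, 1] ^ ((e - 1) / 2) * !![1, 1; 0, 2]) ∧
    ((!![2, 0; 0, 1] : Matrix (Fin 2) (Fin 2) ℤ) * !![1, 0; 1, 1] ^ e =
      !![1, 0; 1, 1] ^ ((e - 1) / 2) * !![2, 0; 1, 1]) := by
  obtain ⟨k, rfl⟩ := hodd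
  rw [show (2 * k + 1 - 1) / 2 = k by omega]
  exact ⟨raney_P_mul_R_pow_odd k, raney_Q_mul_L_pow_odd k,
    raney_N_mul_R_pow_odd k, raney_M_mul_L_pow_odd k⟩

/-- Raney transducer rules for `e` odd:
`P R^e = R L R^{(e-1)/2} N`, `Q L^e = L R L^{(e-1)/2} M`,
`N R^e = R^{(e-1)/2} Q`, `M L^e = L^{(e-1)/2} P`. -/
theorem raney_odd (e : ℕ) (he : 1 ≤ e) (hodd : Odd e) :
    ((!![2, 0; 1, 1] : Matrix (Fin 2) (Fin 2) ℤ) * !![1, 1; 0, 1] ^ e =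
      !![1, 1; 0, 1] * !![1, 0; 1, 1] * !![1, 1; 0, 1] ^ ((e - 1) / 2) * !![1, 0; 0, 2]) ∧
    ((!![1, 1; 0, 2] : Matrix (Fin 2) (Fin 2) ℤ) * !![1, 0; 1, 1] ^ e =
      !![1, 0; 1, 1] * !![1, 1; 0, 1] * !![1, 0; 1, 1] ^ ((e - 1) / 2) * !![2, 0; 0, 1]) ∧
    ((!![1, 0; 0, 2] : Matrix (Fin 2) (Fin 2) ℤ) * !![1, 1; 0, 1] ^ e =
      !![1, 1; 0, 1] ^ ((e - 1) / 2) * !![1, 1; 0, 2]) ∧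
    ((!![2, 0; 0, 1] : Matrix (Fin 2) (Fin 2) ℤ) * !![1, 0; 1, 1] ^ e =
      !![1, 0; 1, 1] ^ ((e - 1) / 2) * !![2, 0; 1, 1]) :=
  raney_odd_general e hodd
end

section
/- Fix integers m ≥ 2, n ≥ 1, and k ≥ (-1)^{n-1} f_{n-2}(m) + 1. Let s = (-1)^n f_n(m) f_{n-1}(m) + k f_{n+1}(m) and t = (-1)^{n-1} f_{n-1}(m)² - k f_n(m), and let α = (√(s² - 4t) - s)/2. Then 0 < 2α < 1, i.e., 2s + 4t + 1 > 0. -/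
/-!
Put `r = k - (-1)^(n-1) f_{n-2} ≥ 1`. Cassini's identity `f_{n-2} f_n - f_{n-1}² = (-1)^(n-1)`
turns the coefficients into `t = -1 - r f_n < 0` and
`2s + 4t + 1 = 2r (f_{n+1} - 2 f_n) + 2m - 3 > 0`, where `f_{n+1} - 2 f_n = (m - 2) f_n + f_{n-1} ≥ 0`.
So `x² + s x + t` is negative at `0` and positive at `1/2`, which places its root `α` in `(0, 1/2)`.
-/

section FibonacciPolynomial

variable {R : Type*} {m : R} {f : ℤ → R}

theorem fib_succ [Ring R] (hrec : ∀ h : ℤ, f (h + 2) = m * f (h + 1) + f h) (n : ℤ) :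
    f (n + 1) = m * f n + f (n - 1) := by
  have h := hrec (n - 1)
  rwa [sub_add_cancel, show n - 1 + 2 = n + 1 by ring] at h

theorem fib_neg_one [Ring R] (hf0 : f 0 = 0) (hf1 : f 1 = 1)
    (hrec : ∀ h : ℤ, f (h + 2) = m * f (h + 1) + f h) : f (-1) = 1 := by
  have h := fib_succ hrec 0
  rwa [zero_add, hf1, hf0, mul_zero, zero_add, zero_sub, eq_comm] at h

theorem fib_cassini [CommRing R] (hf0 : f 0 = 0) (hf1 : f 1 = 1)
    (hrec : ∀ h : ℤ, f (h + 2) = m * f (h + 1) + f h) (n : ℤ) (hn : 0 ≤ n) :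
    f (n - 1) * f (n + 1) - f n ^ 2 = (-1) ^ n.toNat := by
  induction n, hn using Int.leInduction with
  | base => simp [hf0, hf1, fib_neg_one hf0 hf1 hrec]
  | succ n _ ih =>
    rw [show (n + 1).toNat = n.toNat + 1 by omega, pow_succ (-1 : R), ← ih, add_sub_cancel_right,
      add_assoc, one_add_one_eq_two]
    linear_combination f n * hrec n - f (n + 1) * fib_succ hrec n

theorem fib_nonneg [Ring R] [PartialOrder R] [IsOrderedRing R] (hm : 0 ≤ m)
    (hf0 : f 0 = 0) (hf1 : f 1 = 1) (hrec : ∀ h : ℤ, f (h + 2) = m * f (h + 1) + f h)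
    (n : ℤ) (hn : 0 ≤ n) : 0 ≤ f n := by
  suffices 0 ≤ f n ∧ 0 ≤ f (n + 1) from this.1
  induction n, hn using Int.leInduction with
  | base => simp [hf0, hf1]
  | succ n _ ih =>
    refine ⟨ih.2, ?_⟩
    rw [add_assoc, one_add_one_eq_two, hrec]
    exact add_nonneg (mul_nonneg hm ih.2) ih.1

end FibonacciPolynomial

theorem sqrt_sq_sub_sub_mem_Ioo {s t : ℝ} (ht : t < 0) (hst : 0 < 2 * s + 4 * t + 1) :
    0 < √(s ^ 2 - 4 * t) - s ∧ √(s ^ 2 - 4 * t) - s < 1 := by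
  constructor
  · have : s < √(s ^ 2 - 4 * t) := Real.lt_sqrt_of_sq_lt (by linarith)
    linarith
  · have : √(s ^ 2 - 4 * t) < s + 1 := by
      rw [Real.sqrt_lt' (by linarith)]
      linarith
    linarith

theorem t_neg_and_two_s_add_four_t_add_one_pos (m : ℤ) (hm : 2 ≤ m) (f : ℤ → ℤ)
    (hf0 : f 0 = 0) (hf1 : f 1 = 1) (hrec : ∀ h : ℤ, f (h + 2) = m * f (h + 1) + f h)
    (n : ℤ) (hn : 1 ≤ n) (k s t : ℤ) (hk : (-1) ^ (n - 1).toNat * f (n - 2) ≤ k)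
    (hs : s = (-1) ^ n.toNat * f n * f (n - 1) + k * f (n + 1))
    (ht : t = (-1) ^ (n - 1).toNat * f (n - 1) ^ 2 - k * f n) :
    t < 0 ∧ 0 < 2 * s + 4 * t + 1 := by
  have hcas := fib_cassini hf0 hf1 hrec (n - 1) (by omega)
  rw [sub_sub, one_add_one_eq_two, sub_add_cancel] at hcas
  have hsign : (-1 : ℤ) ^ n.toNat = -(-1) ^ (n - 1).toNat := by
    rw [show n.toNat = (n - 1).toNat + 1 by omega, pow_succ, mul_neg_one]
  rw [hsign] at hs
  set ε : ℤ := (-1) ^ (n - 1).toNat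
  have hε : ε ^ 2 = 1 := by rw [← pow_mul, (even_two.mul_left _).neg_one_pow]
  have hrec₁ := fib_succ hrec n
  have hrec₀ := fib_succ hrec (n - 1)
  rw [sub_add_cancel, sub_sub, one_add_one_eq_two] at hrec₀
  have hfn := fib_nonneg (by omega) hf0 hf1 hrec n (by omega)
  have hfn₁ := fib_nonneg (by omega) hf0 hf1 hrec (n - 1) (by omega)
  have ht_eq : t = -1 - (k - ε * f (n - 2)) * f n := by
    linear_combination ht - ε * hcas - hε
  have hkey_eq : 2 * s + 4 * t + 1
      = 2 * (k - ε * f (n - 2)) * ((m - 2) * f n + f (n - 1)) + 2 * m - 3 := by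
    linear_combination 2 * hs + 4 * ht + 2 * k * hrec₁ - 2 * ε * f (n - 1) * hrec₀
      + (2 * ε * m - 4 * ε) * hcas + (2 * m - 4) * hε
  have hr : 0 ≤ k - ε * f (n - 2) := by omega
  refine ⟨?_, ?_⟩
  · rw [ht_eq]
    linarith [mul_nonneg hr hfn]
  · have hgap : 0 ≤ (m - 2) * f n + f (n - 1) := add_nonneg (mul_nonneg (by omega) hfn) hfn₁
    rw [hkey_eq]
    linarith [mul_nonneg hr hgap]

/-- For `m ≥ 2`, `n ≥ 1`, and `k ≥ (-1)^{n-1} f_{n-2}(m) + 1`, the root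
`α = (√(s²-4t) - s)/2` satisfies `0 < 2α < 1`. -/
theorem two_alpha_lt_one (m : ℤ) (hm : 2 ≤ m) (f : ℤ → ℤ)
    (hf0 : f 0 = 0) (hf1 : f 1 = 1)
    (hrec : ∀ h : ℤ, f (h + 2) = m * f (h + 1) + f h)
    (n : ℤ) (hn : 1 ≤ n) (k s t : ℤ)
    (hk : (-1) ^ (n - 1).toNat * f (n - 2) + 1 ≤ k)
    (hs : s = (-1) ^ n.toNat * f n * f (n - 1) + k * f (n + 1))
    (ht : t = (-1) ^ (n - 1).toNat * f (n - 1) ^ 2 - k * f n)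
    (α : ℝ) (hα : α = (Real.sqrt ((s : ℝ) ^ 2 - 4 * (t : ℝ)) - (s : ℝ)) / 2) :
    0 < 2 * α ∧ 2 * α < 1 := by
  obtain ⟨ht_neg, hkey⟩ := t_neg_and_two_s_add_four_t_add_one_pos m hm f hf0 hf1 hrec n hn k s t
    (by omega) hs ht
  rw [hα, mul_div_cancel₀ _ two_ne_zero]
  exact sqrt_sq_sub_sub_mem_Ioo (by exact_mod_cast ht_neg) (by exact_mod_cast hkey)
end

section
/- Fix integers m ≥ 1, n ≥ 1 even, and k with s := f_{n+1}(m) k + f_n(m) f_{n-1}(m) > 0. Let t := -f_{n-1}(m)² - k f_n(m), D := s² - 4t, and T := f_{n+1}(m) s + 2 f_n(m). Then T² - D f_{n+1}(m)² = -4, i.e., (T, f_{n+1}(m)) is a solution of X² - D Y² = -4; equivalently D = (T² + 4) / f_{n+1}(m)². -/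
/-!
Expanding, the terms in `k` cancel and `T² - D f_{n+1}² = 4 f_n² - 4 f_{n-1} f_{n+1}`
once the Cassini identity `f_{n-1} f_{n+1} - f_n² = 1` (valid for even `n`) is used to
replace `f_{n-1} f_{n+1} f_n²` by `f_{n-1}² f_{n+1}² - f_{n-1} f_{n+1}`; the Cassini identity
then gives `-4`.
-/

section CassiniIdentity

variable {R : Type*} [CommRing R] {m : R} {f : ℕ → R}

theorem cassini_of_recurrence (hf0 : f 0 = 0) (hf1 : f 1 = 1)
    (hrec : ∀ h, f (h + 2) = m * f (h + 1) + f h) (n : ℕ) :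
    f n * f (n + 2) - f (n + 1) ^ 2 = (-1) ^ (n + 1) := by
  induction n with
  | zero => simp [hf0, hf1, hrec 0]
  | succ n ih =>
    linear_combination f (n + 1) * hrec (n + 1) - f (n + 2) * hrec n - ih

theorem cassini_of_recurrence_of_even (hf0 : f 0 = 0) (hf1 : f 1 = 1)
    (hrec : ∀ h, f (h + 2) = m * f (h + 1) + f h) {n : ℕ} (hn : 1 ≤ n) (hneven : Even n) :
    f (n - 1) * f (n + 1) - f n ^ 2 = 1 := by
  obtain ⟨j, rfl⟩ : ∃ j, n = j + 1 := ⟨n - 1, by omega⟩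
  rw [Nat.add_sub_cancel, ← hneven.neg_one_pow (α := R)]
  exact cassini_of_recurrence hf0 hf1 hrec j

end CassiniIdentity

theorem pell_neg4_of_cassini {R : Type*} [CommRing R] {a b c : R} (h : a * c - b ^ 2 = 1)
    (k : R) :
    (c * (c * k + b * a) + 2 * b) ^ 2 - ((c * k + b * a) ^ 2 - 4 * (-a ^ 2 - k * b)) * c ^ 2
      = -4 := by
  linear_combination (-4 - 4 * a * c) * h

theorem pell_neg4_solution_general (m : ℤ) (f : ℕ → ℤ)
    (hf0 : f 0 = 0) (hf1 : f 1 = 1)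
    (hrec : ∀ h, f (h + 2) = m * f (h + 1) + f h)
    (n : ℕ) (hn : 1 ≤ n) (hneven : Even n)
    (k s t D T : ℤ)
    (hs : s = f (n + 1) * k + f n * f (n - 1))
    (ht : t = -(f (n - 1)) ^ 2 - k * f n)
    (hD : D = s ^ 2 - 4 * t)
    (hT : T = f (n + 1) * s + 2 * f n) :
    T ^ 2 - D * f (n + 1) ^ 2 = -4 := by
  subst hT hD ht hs
  exact pell_neg4_of_cassini (cassini_of_recurrence_of_even hf0 hf1 hrec hn hneven) k

/-- For `n` even, with `s = f_{n+1} k + f_n f_{n-1} > 0`, `t = -f_{n-1}² - k f_n`,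
`D = s² - 4t` and `T = f_{n+1} s + 2 f_n`, one has `T² - D f_{n+1}² = -4`. -/
theorem pell_neg4_solution (m : ℤ) (hm : 1 ≤ m) (f : ℕ → ℤ)
    (hf0 : f 0 = 0) (hf1 : f 1 = 1)
    (hrec : ∀ h, f (h + 2) = m * f (h + 1) + f h)
    (n : ℕ) (hn : 1 ≤ n) (hneven : Even n)
    (k s t D T : ℤ)
    (hs : s = f (n + 1) * k + f n * f (n - 1)) (hspos : 0 < s)
    (ht : t = -(f (n - 1)) ^ 2 - k * f n)
    (hD : D = s ^ 2 - 4 * t)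
    (hT : T = f (n + 1) * s + 2 * f n) :
    T ^ 2 - D * f (n + 1) ^ 2 = -4 :=
  pell_neg4_solution_general m f hf0 hf1 hrec n hn hneven k s t D T hs ht hD hT
end
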